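/- arXiv:2603.01255 — 6 statements merged into one kernel-verified Lean document; each statement's English description precedes it below -/
import Mathlib

section
/- The integral over α from 0 to π of (sin α / 2) multiplied by L(α) equals 3/2 − sin(π·log₂3)/π − sin(2π·log₂3)/(2π), where L(α) is the piecewise function defined by: L(α) = 3/2 + 3α/(2π) for 0 ≤ α ≤ π·log₂(9/8); L(α) = log₂3 + α/π for π·log₂(9/8) < α ≤ π·log₂(4/3); L(α) = 2 for π·log₂(4/3) < α < π·log₂(3/2); L(α) = log₂3 + 1 − α/π for π·log₂(3/2) ≤ α < π·log₂(16/9); and L(α) = 3 − 3α/(2π) for π·log₂(16/9) ≤ α ≤ π. -/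
/-!
On each of the five pieces `L` is affine, and `sin α * (p + q * α)` has the antiderivative
`q * sin α - (p + q * α) * cos α`. As `L` is continuous, the cosine terms telescope to
`L 0 + L π = 3`. Every breakpoint is `π * (m * log₂ 3 + n)` with integers `m, n`, so the sines
there are `± sin (π log₂ 3)` or `± sin (2π log₂ 3)`.
-/

open Real

/-- Average codeword length of the piecewise Huffman encoding at angle `α`. -/
noncomputable def L (α : ℝ) : ℝ :=
  if α ≤ π * logb 2 (9/8) then 3/2 + 3*α/(2*π)
  else if α ≤ π * logb 2 (4/3) then logb 2 3 + α/π
  else if α < π * logb 2 (3/2) then 2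
  else if α < π * logb 2 (16/9) then logb 2 3 + 1 - α/π
  else 3 - 3*α/(2*π)

open Set MeasureTheory intervalIntegral

noncomputable def sinMulAffineAntideriv (p q x : ℝ) : ℝ := q * sin x - (p + q * x) * cos x

theorem hasDerivAt_sinMulAffineAntideriv (p q x : ℝ) :
    HasDerivAt (sinMulAffineAntideriv p q) (sin x * (p + q * x)) x := by
  have affine : HasDerivAt (fun x => p + q * x) q x := by
    simpa using ((hasDerivAt_id x).const_mul q).const_add p
  exact (((hasDerivAt_sin x).const_mul q).sub (affine.mul (hasDerivAt_cos x))).congr_deriv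
    (by ring)

theorem intervalIntegrable_sin_mul_of_eqOn_Ioo {f : ℝ → ℝ} {a b p q : ℝ} (hab : a ≤ b)
    (hf : EqOn f (fun x => p + q * x) (Ioo a b)) :
    IntervalIntegrable (fun x => sin x * f x) volume a b := by
  have hg : IntervalIntegrable (fun x => sin x * (p + q * x)) volume a b :=
    (by fun_prop : Continuous _).intervalIntegrable a b
  exact hg.congr_uIoo (uIoo_of_le hab ▸ fun x hx => by simp [hf hx])

theorem integral_sin_mul_of_eqOn_Ioo {f : ℝ → ℝ} {a b p q : ℝ} (hab : a ≤ b)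
    (hf : EqOn f (fun x => p + q * x) (Ioo a b)) :
    ∫ x in a..b, sin x * f x = sinMulAffineAntideriv p q b - sinMulAffineAntideriv p q a := by
  rw [integral_congr_Ioo_of_le (g := fun x => sin x * (p + q * x)) hab
    fun x hx => by simp [hf hx]]
  exact integral_eq_sub_of_hasDerivAt (fun x _ => hasDerivAt_sinMulAffineAntideriv p q x)
    (Continuous.intervalIntegrable (by fun_prop) a b)

theorem three_halves_lt_logb_two_three : 3 / 2 < logb 2 3 := by
  have h : logb 2 (2 ^ 3) < logb 2 (3 ^ 2) := logb_lt_logb one_lt_two (by norm_num) (by norm_num)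
  simp only [logb_pow, logb_self_eq_one one_lt_two] at h
  push_cast at h
  linarith

theorem logb_two_three_lt_five_thirds : logb 2 3 < 5 / 3 := by
  have h : logb 2 (3 ^ 3) < logb 2 (2 ^ 5) := logb_lt_logb one_lt_two (by norm_num) (by norm_num)
  simp only [logb_pow, logb_self_eq_one one_lt_two] at h
  push_cast at h
  linarith

theorem pi_mul_logb_two_nine_div_eight : π * logb 2 (9/8) = 2 * (π * logb 2 3) - 3 * π := by
  rw [show (9/8 : ℝ) = 3^2 / 2^3 by norm_num, logb_div (by norm_num) (by norm_num), logb_pow,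
    logb_pow, logb_self_eq_one one_lt_two]
  push_cast
  ring

theorem pi_mul_logb_two_four_div_three : π * logb 2 (4/3) = 2 * π - π * logb 2 3 := by
  rw [show (4/3 : ℝ) = 2^2 / 3 by norm_num, logb_div (by norm_num) (by norm_num), logb_pow,
    logb_self_eq_one one_lt_two]
  push_cast
  ring

theorem pi_mul_logb_two_three_div_two : π * logb 2 (3/2) = π * logb 2 3 - π := by
  rw [logb_div (by norm_num) (by norm_num), logb_self_eq_one one_lt_two]
  ring

theorem pi_mul_logb_two_sixteen_div_nine : π * logb 2 (16/9) = 4 * π - 2 * (π * logb 2 3) := by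
  rw [show (16/9 : ℝ) = 2^4 / 3^2 by norm_num, logb_div (by norm_num) (by norm_num), logb_pow,
    logb_pow, logb_self_eq_one one_lt_two]
  push_cast
  ring

theorem L_breakpoints_monotone :
    0 ≤ π * logb 2 (9/8) ∧ π * logb 2 (9/8) ≤ π * logb 2 (4/3) ∧
      π * logb 2 (4/3) ≤ π * logb 2 (3/2) ∧ π * logb 2 (3/2) ≤ π * logb 2 (16/9) ∧
      π * logb 2 (16/9) ≤ π := by
  rw [pi_mul_logb_two_nine_div_eight, pi_mul_logb_two_four_div_three,
    pi_mul_logb_two_three_div_two, pi_mul_logb_two_sixteen_div_nine]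
  have hlo := mul_lt_mul_of_pos_left three_halves_lt_logb_two_three pi_pos
  have hhi := mul_lt_mul_of_pos_left logb_two_three_lt_five_thirds pi_pos
  refine ⟨?_, ?_, ?_, ?_, ?_⟩ <;> linarith

theorem L_eqOn_Ioo₁ : EqOn L (fun α => 3/2 + 3/(2*π) * α) (Ioo 0 (π * logb 2 (9/8))) := by
  intro α hα
  simp only [L, if_pos hα.2.le]
  ring

theorem L_eqOn_Ioo₂ :
    EqOn L (fun α => logb 2 3 + π⁻¹ * α) (Ioo (π * logb 2 (9/8)) (π * logb 2 (4/3))) := by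
  rintro α ⟨h₁, h₂⟩
  simp only [L, if_neg h₁.not_ge, if_pos h₂.le]
  ring

theorem L_eqOn_Ioo₃ :
    EqOn L (fun α => 2 + 0 * α) (Ioo (π * logb 2 (4/3)) (π * logb 2 (3/2))) := by
  obtain ⟨-, h₁₂, -⟩ := L_breakpoints_monotone
  rintro α ⟨h₂, h₃⟩
  simp only [L, if_neg (h₁₂.trans_lt h₂).not_ge, if_neg h₂.not_ge, if_pos h₃]
  ring

theorem L_eqOn_Ioo₄ : EqOn L (fun α => (logb 2 3 + 1) + (-π⁻¹) * α)
    (Ioo (π * logb 2 (3/2)) (π * logb 2 (16/9))) := by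
  obtain ⟨-, h₁₂, h₂₃, -⟩ := L_breakpoints_monotone
  rintro α ⟨h₃, h₄⟩
  simp only [L, if_neg ((h₁₂.trans h₂₃).trans_lt h₃).not_ge,
    if_neg (h₂₃.trans_lt h₃).not_ge, if_neg h₃.not_gt, if_pos h₄]
  ring

theorem L_eqOn_Ioo₅ :
    EqOn L (fun α => 3 + (-(3/(2*π))) * α) (Ioo (π * logb 2 (16/9)) π) := by
  obtain ⟨-, h₁₂, h₂₃, h₃₄, -⟩ := L_breakpoints_monotone
  rintro α ⟨h₄, -⟩
  simp only [L, if_neg (((h₁₂.trans h₂₃).trans h₃₄).trans_lt h₄).not_ge,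
    if_neg ((h₂₃.trans h₃₄).trans_lt h₄).not_ge, if_neg (h₃₄.trans_lt h₄).not_gt,
    if_neg h₄.not_gt]
  ring

theorem integral_sin_mul_L :
    ∫ α in (0:ℝ)..π, sin α * L α
      = 3 - 2 * sin (π * logb 2 3) / π - sin (2 * (π * logb 2 3)) / π := by
  obtain ⟨h₁, h₂, h₃, h₄, h₅⟩ := L_breakpoints_monotone
  have i₁ := intervalIntegrable_sin_mul_of_eqOn_Ioo h₁ L_eqOn_Ioo₁
  have i₂ := intervalIntegrable_sin_mul_of_eqOn_Ioo h₂ L_eqOn_Ioo₂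
  have i₃ := intervalIntegrable_sin_mul_of_eqOn_Ioo h₃ L_eqOn_Ioo₃
  have i₄ := intervalIntegrable_sin_mul_of_eqOn_Ioo h₄ L_eqOn_Ioo₄
  have i₅ := intervalIntegrable_sin_mul_of_eqOn_Ioo h₅ L_eqOn_Ioo₅
  rw [← integral_add_adjacent_intervals i₁ (i₂.trans (i₃.trans (i₄.trans i₅))),
    ← integral_add_adjacent_intervals i₂ (i₃.trans (i₄.trans i₅)),
    ← integral_add_adjacent_intervals i₃ (i₄.trans i₅), ← integral_add_adjacent_intervals i₄ i₅,
    integral_sin_mul_of_eqOn_Ioo h₁ L_eqOn_Ioo₁,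
    integral_sin_mul_of_eqOn_Ioo h₂ L_eqOn_Ioo₂,
    integral_sin_mul_of_eqOn_Ioo h₃ L_eqOn_Ioo₃,
    integral_sin_mul_of_eqOn_Ioo h₄ L_eqOn_Ioo₄,
    integral_sin_mul_of_eqOn_Ioo h₅ L_eqOn_Ioo₅]
  have sin_three_pi : sin (3 * π) = 0 := by exact_mod_cast sin_nat_mul_pi 3
  have sin_four_pi : sin (4 * π) = 0 := by exact_mod_cast sin_nat_mul_pi 4
  have cos_three_pi : cos (3 * π) = -1 := by
    have := cos_nat_mul_pi 3; norm_num at this; exact this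
  have cos_four_pi : cos (4 * π) = 1 := by
    have := cos_nat_mul_pi 4; norm_num at this; exact this
  simp only [sinMulAffineAntideriv, pi_mul_logb_two_nine_div_eight,
    pi_mul_logb_two_four_div_three, pi_mul_logb_two_three_div_two,
    pi_mul_logb_two_sixteen_div_nine, sin_sub, cos_sub, sin_three_pi, cos_three_pi, sin_four_pi,
    cos_four_pi, sin_two_pi, cos_two_pi, sin_pi, cos_pi, sin_zero, cos_zero]
  field_simp
  ring

theorem average_communication_cost :
    ∫ α in (0:ℝ)..π, (Real.sin α / 2) * L α
      = 3/2 - Real.sin (π * logb 2 3) / π - Real.sin (2*π * logb 2 3) / (2*π) := by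
  simp_rw [div_mul_eq_mul_div, intervalIntegral.integral_div, integral_sin_mul_L, mul_assoc]
  ring
end

section
/- Let P denote the probability density π(λ) over deterministic classical strategies and suppose a classical model with message alphabet of size d_C exactly reproduces the quantum behavior p(b|x,y) = tr(ρₓ M_{b|y}) for a finite set of states {ρₓ} and a set of measurements including, for each pair (x,x′), the Helstrom measurement for ρₓ and ρ_{x′}. Then for every pair (x,x′), the total weight of deterministic strategies that assign different messages to inputs x and x′ is at least (1/2)·‖ρₓ − ρ_{x′}‖₁, where ‖·‖₁ denotes the trace norm. -/
open Matrix ComplexOrder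

/-- Trace norm of a complex matrix: `‖A‖₁ = tr √(Aᴴ A)`. -/
noncomputable def traceNorm {d : ℕ} (A : Matrix (Fin d) (Fin d) ℂ) : ℝ :=
  (((Matrix.posSemidef_conjTranspose_mul_self A).1.eigenvectorUnitary : Matrix (Fin d) (Fin d) ℂ) *
    diagonal (((↑) : ℝ → ℂ) ∘ Real.sqrt ∘ (Matrix.posSemidef_conjTranspose_mul_self A).1.eigenvalues) *
    star ((Matrix.posSemidef_conjTranspose_mul_self A).1.eigenvectorUnitary :
      Matrix (Fin d) (Fin d) ℂ)).trace.re

/-! The Helstrom measurement turns the trace-norm bound into a bound on the difference of two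
outcome probabilities, `tr ρₓ M₊ - tr ρ_{x'} M₊ = ½‖ρₓ - ρ_{x'}‖₁`. In the classical model
this difference is an average over `λ` of differences of decoding probabilities in `[0, 1]`; it
vanishes whenever `λ` sends `x` and `x'` to the same message and is at most `1` otherwise. -/

lemma sum_mul_sub_sum_mul_le_sum_filter_ne {Λ C : Type*} [Fintype Λ] [DecidableEq C]
    (π : Λ → ℝ) (hπ : ∀ l, 0 ≤ π l) (q : Λ → C → ℝ) (hq0 : ∀ l c, 0 ≤ q l c)
    (hq1 : ∀ l c, q l c ≤ 1) (e e' : Λ → C) :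
    ∑ l, π l * q l (e l) - ∑ l, π l * q l (e' l)
      ≤ ∑ l ∈ Finset.univ.filter (fun l => e l ≠ e' l), π l := by
  rw [← Finset.sum_sub_distrib, Finset.sum_filter]
  refine Finset.sum_le_sum fun l _ => ?_
  split_ifs with hne
  · rw [← mul_sub]
    exact mul_le_of_le_one_right (hπ l) (by linarith [hq1 l (e l), hq0 l (e' l)])
  · rw [not_not.mp hne, sub_self]

theorem state_discrimination_restricts_classical_models_general
    {d dC : ℕ} {X Y B Λ : Type*} [Fintype B] [Fintype Λ]
    (ρ : X → Matrix (Fin d) (Fin d) ℂ)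
    (M : Y → B → Matrix (Fin d) (Fin d) ℂ)
    (π' : Λ → ℝ) (hπ : ∀ l, 0 ≤ π' l)
    (DA : Λ → X → Fin dC)
    (pB : Λ → Fin dC → Y → B → ℝ)
    (hpB : ∀ l c y b, 0 ≤ pB l c y b) (hpB1 : ∀ l c y, ∑ b, pB l c y b = 1)
    (hmodel : ∀ x y b, ((∑ l, π' l * pB l (DA l x) y b : ℝ) : ℂ) = (ρ x * M y b).trace)
    (hHelstrom : ∀ x x' : X, ∃ (y : Y) (b : B),
        ((ρ x - ρ x') * M y b).trace = ((1/2 * traceNorm (ρ x - ρ x') : ℝ) : ℂ))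
    (x x' : X) :
    1/2 * traceNorm (ρ x - ρ x')
      ≤ ∑ l ∈ Finset.univ.filter (fun l => DA l x ≠ DA l x'), π' l := by
  obtain ⟨y, b, hy⟩ := hHelstrom x x'
  have hgap : 1/2 * traceNorm (ρ x - ρ x')
      = ∑ l, π' l * pB l (DA l x) y b - ∑ l, π' l * pB l (DA l x') y b := by
    apply Complex.ofReal_injective
    rw [Complex.ofReal_sub, hmodel, hmodel, ← trace_sub, ← sub_mul, hy]
  have hpB_le_one : ∀ l c, pB l c y b ≤ 1 := fun l c =>
    hpB1 l c y ▸ Finset.single_le_sum (fun b' _ => hpB l c y b') (Finset.mem_univ b)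
  rw [hgap]
  exact sum_mul_sub_sum_mul_le_sum_filter_ne π' hπ (fun l c => pB l c y b)
    (fun l c => hpB l c y b) hpB_le_one (fun l => DA l x) (fun l => DA l x')

/-- A classical model reproducing the quantum behavior of states `ρ` and measurements `M`
(including, for each pair, the Helstrom measurement discriminating them) must assign, for
every pair `x, x'`, total weight at least `‖ρ x − ρ x'‖₁ / 2` to deterministic strategies
sending different messages on `x` and `x'`. -/
theorem state_discrimination_restricts_classical_models
    {d dC : ℕ} {X Y B Λ : Type*} [Fintype X] [Fintype Y] [Fintype B] [Fintype Λ]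
    (ρ : X → Matrix (Fin d) (Fin d) ℂ)
    (hρ : ∀ x, (ρ x).PosSemidef ∧ (ρ x).trace = 1)
    (M : Y → B → Matrix (Fin d) (Fin d) ℂ)
    (hM : ∀ y b, (M y b).PosSemidef) (hM1 : ∀ y, ∑ b, M y b = 1)
    (π' : Λ → ℝ) (hπ : ∀ l, 0 ≤ π' l) (hπ1 : ∑ l, π' l = 1)
    (DA : Λ → X → Fin dC)
    (pB : Λ → Fin dC → Y → B → ℝ)
    (hpB : ∀ l c y b, 0 ≤ pB l c y b) (hpB1 : ∀ l c y, ∑ b, pB l c y b = 1)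
    (hmodel : ∀ x y b, ((∑ l, π' l * pB l (DA l x) y b : ℝ) : ℂ) = (ρ x * M y b).trace)
    (hHelstrom : ∀ x x' : X, ∃ (y : Y) (b : B),
        ((ρ x - ρ x') * M y b).trace = ((1/2 * traceNorm (ρ x - ρ x') : ℝ) : ℂ))
    (x x' : X) :
    1/2 * traceNorm (ρ x - ρ x')
      ≤ ∑ l ∈ Finset.univ.filter (fun l => DA l x ≠ DA l x'), π' l :=
  state_discrimination_restricts_classical_models_general ρ M π' hπ DA pB hpB hpB1 hmodel hHelstrom
    x x'
end

section
/- Suppose a classical model with message alphabet of size d_C exactly reproduces the behavior of a finite set of states {ρₓ} and measurements that include, for each orthogonal pair of states, a projective measurement perfectly discriminating them. Then for every λ with π(λ) > 0 and every message c, the set S_c(λ) = {ρₓ : D_A(c|x,λ) = 1} contains no pair of states ρₓ, ρ_{x′} with tr(ρₓ ρ_{x′}) = 0. -/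
open Matrix ComplexOrder

/-- In any classical model exactly reproducing the behavior of states `ρ` and measurements
`M` that perfectly discriminate each orthogonal pair, a deterministic encoding with
positive weight never assigns the same message to two orthogonal states. -/
theorem no_orthogonal_pair_gets_same_message
    {d dC : ℕ} {X Y B Λ : Type*} [Fintype X] [Fintype Y] [Fintype B] [Fintype Λ]
    (ρ : X → Matrix (Fin d) (Fin d) ℂ)
    (hρ : ∀ x, (ρ x).PosSemidef ∧ (ρ x).trace = 1)
    (M : Y → B → Matrix (Fin d) (Fin d) ℂ)
    (hM : ∀ y b, (M y b).PosSemidef) (hM1 : ∀ y, ∑ b, M y b = 1)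
    (π' : Λ → ℝ) (hπ : ∀ l, 0 ≤ π' l) (hπ1 : ∑ l, π' l = 1)
    (DA : Λ → X → Fin dC)
    (pB : Λ → Fin dC → Y → B → ℝ)
    (hpB : ∀ l c y b, 0 ≤ pB l c y b) (hpB1 : ∀ l c y, ∑ b, pB l c y b = 1)
    (hmodel : ∀ x y b, ((∑ l, π' l * pB l (DA l x) y b : ℝ) : ℂ) = (ρ x * M y b).trace)
    (hdisc : ∀ x x' : X, (ρ x * ρ x').trace = 0 →
        ∃ (y : Y) (b : B), (ρ x * M y b).trace = 1 ∧ (ρ x' * M y b).trace = 0) :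
    ∀ l : Λ, 0 < π' l → ∀ x x' : X, (ρ x * ρ x').trace = 0 → DA l x ≠ DA l x' := by
  intro l hl x x' horth heq
  obtain ⟨y, b, h1, h0⟩ := hdisc x x' horth
  have hle : ∀ m c, pB m c y b ≤ 1 := fun m c => by
    calc pB m c y b ≤ ∑ b', pB m c y b' :=
          Finset.single_le_sum (fun i _ => hpB m c y i) (Finset.mem_univ b)
      _ = 1 := hpB1 m c y
  have hs1 : (∑ m, π' m * pB m (DA m x) y b : ℝ) = 1 := by
    have := hmodel x y b; rw [h1] at this; exact_mod_cast this
  have hs0 : (∑ m, π' m * pB m (DA m x') y b : ℝ) = 0 := by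
    have := hmodel x' y b; rw [h0] at this; exact_mod_cast this
  have hterm0 : π' l * pB l (DA l x') y b = 0 :=
    (Finset.sum_eq_zero_iff_of_nonneg
      (fun m _ => mul_nonneg (hπ m) (hpB m _ y b))).mp hs0 l (Finset.mem_univ l)
  have hp0 : pB l (DA l x') y b = 0 := by
    rcases mul_eq_zero.mp hterm0 with h | h
    · exact absurd h (ne_of_gt hl)
    · exact h
  have hterm1 : π' l * pB l (DA l x) y b = π' l := by
    by_contra hne
    have hlt : π' l * pB l (DA l x) y b < π' l :=
      lt_of_le_of_ne (by nlinarith [hle l (DA l x)]) hne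
    have hstrict : (∑ m, π' m * pB m (DA m x) y b) < ∑ m, π' m :=
      Finset.sum_lt_sum (fun m _ => by nlinarith [hle m (DA m x), hπ m])
        ⟨l, Finset.mem_univ l, hlt⟩
    rw [hs1, hπ1] at hstrict; exact lt_irrefl _ hstrict
  rw [heq, hp0, mul_zero] at hterm1
  exact absurd hterm1.symm (ne_of_gt hl)
end

section
/- Let G be a finite graph whose vertices are unit vectors in a d-dimensional complex Hilbert space, with an edge between two vertices exactly when the vectors are orthogonal, and suppose a classical model with message alphabet [d_C] exactly reproduces the behavior of the corresponding pure states and all pairwise perfect-discrimination measurements. Then d_C ≥ χ(G), the chromatic number of G. -/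
open Matrix ComplexOrder

/-!
A deterministic strategy `l` of positive weight must answer a perfect-discrimination measurement
for an orthogonal pair `a, b` with certainty in both directions: outcome probability `1` from the
message `DA l a` and `0` from `DA l b`. Hence `DA l a ≠ DA l b`, i.e. `DA l` is a proper colouring
with `d_C` colours, and such an `l` exists because the weights sum to `1`.
-/

lemma eq_zero_of_sum_mul_eq_zero {ι : Type*} [Fintype ι] {w p : ι → ℝ}
    (hw : ∀ i, 0 ≤ w i) (hp : ∀ i, 0 ≤ p i) (h : ∑ i, w i * p i = 0) {i : ι} (hi : 0 < w i) :
    p i = 0 := by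
  have hterm := (Finset.sum_eq_zero_iff_of_nonneg fun j _ => mul_nonneg (hw j) (hp j)).mp h i
    (Finset.mem_univ i)
  exact (mul_eq_zero.mp hterm).resolve_left hi.ne'

lemma eq_one_of_sum_mul_eq_one {ι : Type*} [Fintype ι] {w p : ι → ℝ}
    (hw : ∀ i, 0 ≤ w i) (hw1 : ∑ i, w i = 1) (hp : ∀ i, p i ≤ 1) (h : ∑ i, w i * p i = 1)
    {i : ι} (hi : 0 < w i) : p i = 1 := by
  have hcompl : ∑ j, w j * (1 - p j) = 0 := by
    simp only [mul_sub, mul_one, Finset.sum_sub_distrib, hw1, h, sub_self]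
  have := eq_zero_of_sum_mul_eq_zero hw (fun j => sub_nonneg.mpr (hp j)) hcompl hi
  linarith

lemma message_ne_of_perfect_discrimination {Λ C Y B : Type*} [Fintype Λ] [Fintype B]
    {π' : Λ → ℝ} {pB : Λ → C → Y → B → ℝ} (hπ : ∀ l, 0 ≤ π' l) (hπ1 : ∑ l, π' l = 1)
    (hpB : ∀ l c y b, 0 ≤ pB l c y b) (hpB1 : ∀ l c y, ∑ b, pB l c y b = 1)
    {e f : Λ → C} {y : Y} {b : B}
    (he : ∑ l, π' l * pB l (e l) y b = 1) (hf : ∑ l, π' l * pB l (f l) y b = 0)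
    {l : Λ} (hl : 0 < π' l) : e l ≠ f l := by
  have hpB_le_one : ∀ l c, pB l c y b ≤ 1 := fun l c =>
    hpB1 l c y ▸ Finset.single_le_sum (fun b' _ => hpB l c y b') (Finset.mem_univ b)
  have he1 := eq_one_of_sum_mul_eq_one hπ hπ1 (fun l => hpB_le_one l (e l)) he hl
  have hf0 := eq_zero_of_sum_mul_eq_zero hπ (fun l => hpB l (f l) y b) hf hl
  intro hef
  rw [hef, hf0] at he1
  exact zero_ne_one he1

theorem chromatic_number_lower_bounds_classical_dimension_general
    {d dC : ℕ} {V Y B Λ : Type*} [Fintype B] [Fintype Λ]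
    (G : SimpleGraph V)
    (ρ : V → Matrix (Fin d) (Fin d) ℂ)
    (M : Y → B → Matrix (Fin d) (Fin d) ℂ)
    (π' : Λ → ℝ) (hπ : ∀ l, 0 ≤ π' l) (hπ1 : ∑ l, π' l = 1)
    (DA : Λ → V → Fin dC)
    (pB : Λ → Fin dC → Y → B → ℝ)
    (hpB : ∀ l c y b, 0 ≤ pB l c y b) (hpB1 : ∀ l c y, ∑ b, pB l c y b = 1)
    (hmodel : ∀ x y b, ((∑ l, π' l * pB l (DA l x) y b : ℝ) : ℂ) = (ρ x * M y b).trace)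
    (hdisc : ∀ a b : V, G.Adj a b →
        ∃ (y : Y) (bb : B), (ρ a * M y bb).trace = 1 ∧ (ρ b * M y bb).trace = 0) :
    G.chromaticNumber ≤ dC := by
  obtain ⟨l, -, hl⟩ : ∃ l ∈ Finset.univ, (0 : ℝ) < π' l :=
    Finset.exists_lt_of_sum_lt (by simp [hπ1])
  have hproper : ∀ {a b : V}, G.Adj a b → DA l a ≠ DA l b := by
    intro a b hab
    obtain ⟨y, bb, ha, hb⟩ := hdisc a b hab
    have ha' : ∑ l, π' l * pB l (DA l a) y bb = 1 := by exact_mod_cast (hmodel a y bb).trans ha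
    have hb' : ∑ l, π' l * pB l (DA l b) y bb = 0 := by exact_mod_cast (hmodel b y bb).trans hb
    exact message_ne_of_perfect_discrimination hπ hπ1 hpB hpB1 ha' hb' hl
  exact SimpleGraph.Colorable.chromaticNumber_le ⟨SimpleGraph.Coloring.mk (DA l) hproper⟩

/-- If a classical model with alphabet `Fin dC` exactly reproduces the behavior of a family
of pure states (unit vectors `ψ`) together with all pairwise perfect-discrimination
measurements, then `dC` is at least the chromatic number of the orthogonality graph. -/
theorem chromatic_number_lower_bounds_classical_dimension
    {d dC : ℕ} {V Y B Λ : Type*} [Fintype V] [Fintype Y] [Fintype B] [Fintype Λ]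
    (ψ : V → EuclideanSpace ℂ (Fin d)) (hψ : ∀ x, ‖ψ x‖ = 1)
    (G : SimpleGraph V)
    (hG : ∀ a b, G.Adj a b ↔ a ≠ b ∧ (inner ℂ (ψ a) (ψ b) : ℂ) = 0)
    (ρ : V → Matrix (Fin d) (Fin d) ℂ)
    (hρ : ∀ x, ρ x = Matrix.vecMulVec (fun i => ψ x i) (fun i => star (ψ x i)))
    (M : Y → B → Matrix (Fin d) (Fin d) ℂ)
    (hM : ∀ y b, (M y b).PosSemidef) (hM1 : ∀ y, ∑ b, M y b = 1)
    (π' : Λ → ℝ) (hπ : ∀ l, 0 ≤ π' l) (hπ1 : ∑ l, π' l = 1)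
    (DA : Λ → V → Fin dC)
    (pB : Λ → Fin dC → Y → B → ℝ)
    (hpB : ∀ l c y b, 0 ≤ pB l c y b) (hpB1 : ∀ l c y, ∑ b, pB l c y b = 1)
    (hmodel : ∀ x y b, ((∑ l, π' l * pB l (DA l x) y b : ℝ) : ℂ) = (ρ x * M y b).trace)
    (hdisc : ∀ a b : V, G.Adj a b →
        ∃ (y : Y) (bb : B), (ρ a * M y bb).trace = 1 ∧ (ρ b * M y bb).trace = 0) :
    G.chromaticNumber ≤ dC :=
  chromatic_number_lower_bounds_classical_dimension_general G ρ M π' hπ hπ1 DA pB hpB hpB1 hmodel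
    hdisc
end

section
/- For every positive integer k, 4·Σ_{i=0}^{k−1} C(4k−1, i) < 4^{4k}/3^{3k}, and consequently 2^{4k}·3^{3k}/4^{4k} = (27/16)^k. -/
theorem hadamard_binomial_bound (k : ℕ) (hk : 0 < k) :
    ((4 * ∑ i ∈ Finset.range k, (4*k-1).choose i : ℕ) : ℝ) < 4^(4*k) / 3^(3*k) ∧
    (2:ℝ)^(4*k) * 3^(3*k) / 4^(4*k) = (27/16)^k := by
  constructor
  · have key : (4 * ∑ i ∈ Finset.range k, (4*k-1).choose i) * 3^(3*k) < 4^(4*k) := by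
      have h1 : (∑ i ∈ Finset.range k, (4*k-1).choose i) * 3^(3*k) < 4^(4*k-1) := by
        calc (∑ i ∈ Finset.range k, (4*k-1).choose i) * 3^(3*k)
            = ∑ i ∈ Finset.range k, (4*k-1).choose i * 3^(3*k) := by
              rw [Finset.sum_mul]
          _ ≤ ∑ i ∈ Finset.range k, 3^(4*k-1-i) * (4*k-1).choose i := by
              apply Finset.sum_le_sum
              intro i hi
              rw [Finset.mem_range] at hi
              rw [mul_comm]
              gcongr
              · norm_num
              · omega
          _ < ∑ i ∈ Finset.range (4*k), 3^(4*k-1-i) * (4*k-1).choose i := by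
              apply Finset.sum_lt_sum_of_subset (i := 4*k-1)
              · apply Finset.range_subset_range.mpr; omega
              · exact Finset.mem_range.mpr (by omega)
              · simp only [Finset.mem_range]; omega
              · simp [Nat.choose_self]
              · intro j _ _; exact Nat.zero_le _
          _ = 4^(4*k-1) := by
              have := add_pow 1 3 (4*k-1)
              norm_num at this
              rw [show 4*k-1+1 = 4*k by omega] at this
              exact this.symm
      calc 4 * (∑ i ∈ Finset.range k, (4*k-1).choose i) * 3^(3*k)
          = 4 * ((∑ i ∈ Finset.range k, (4*k-1).choose i) * 3^(3*k)) := by ring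
        _ < 4 * 4^(4*k-1) := by omega
        _ = 4^(4*k) := by
            rw [← pow_succ']
            congr 1
            omega
    rw [lt_div_iff₀ (by positivity)]
    push_cast
    exact_mod_cast key
  · rw [pow_mul, pow_mul, pow_mul, ← mul_pow, ← div_pow]
    norm_num
end

section
/- Among the 13 Yu–Oh vectors in ℝ³ — v₁=(1,1,1), v₂=(−1,1,1), v₃=(1,−1,1), v₄=(1,1,−1), v₅=(1,1,0), v₆=(1,0,1), v₇=(0,1,1), v₈=(1,−1,0), v₉=(1,0,−1), v₁₀=(0,1,−1), v₁₁=(1,0,0), v₁₂=(0,1,0), v₁₃=(0,0,1) — the orthogonality graph (edges between vectors with zero dot product) has chromatic number exactly 4. -/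
/-- The 13 Yu–Oh vectors in ℝ³ (with integer coordinates). -/
def yuOh : Fin 13 → Fin 3 → ℤ :=
  ![![1,1,1], ![-1,1,1], ![1,-1,1], ![1,1,-1], ![1,1,0], ![1,0,1], ![0,1,1],
    ![1,-1,0], ![1,0,-1], ![0,1,-1], ![1,0,0], ![0,1,0], ![0,0,1]]

/-- The orthogonality graph of the 13 Yu–Oh vectors. -/
def yuOhGraph : SimpleGraph (Fin 13) :=
  SimpleGraph.fromRel (fun i j => ∑ k, yuOh i k * yuOh j k = 0)

instance : DecidableRel yuOhGraph.Adj := fun a b =>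
  decidable_of_iff (a ≠ b ∧ (∑ k, yuOh a k * yuOh b k = 0 ∨ ∑ k, yuOh b k * yuOh a k = 0))
    (by rw [yuOhGraph, SimpleGraph.fromRel_adj])

lemma yuOh_colorable4 : yuOhGraph.Colorable 4 := by
  refine ⟨⟨![0,0,0,0,1,1,1,2,2,3,2,0,3], ?_⟩⟩
  intro a b h
  revert h
  exact (decide_eq_true_eq (p := yuOhGraph.Adj a b → _)).mp (by revert a b; decide)

lemma yuOh_not_colorable3 : ¬ yuOhGraph.Colorable 3 := by
  rintro ⟨c⟩
  have hv : ∀ a b : Fin 13, yuOhGraph.Adj a b → c a ≠ c b := fun a b h => c.valid h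
  have e0 := hv 0 7 (by decide)
  have e1 := hv 0 8 (by decide)
  have e2 := hv 0 9 (by decide)
  have e3 := hv 1 4 (by decide)
  have e4 := hv 1 5 (by decide)
  have e5 := hv 1 9 (by decide)
  have e6 := hv 2 4 (by decide)
  have e7 := hv 2 6 (by decide)
  have e8 := hv 2 8 (by decide)
  have e9 := hv 3 5 (by decide)
  have e10 := hv 3 6 (by decide)
  have e11 := hv 3 7 (by decide)
  have e12 := hv 4 7 (by decide)
  have e13 := hv 4 12 (by decide)
  have e14 := hv 5 8 (by decide)
  have e15 := hv 5 11 (by decide)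
  have e16 := hv 6 9 (by decide)
  have e17 := hv 6 10 (by decide)
  have e18 := hv 7 12 (by decide)
  have e19 := hv 8 11 (by decide)
  have e20 := hv 9 10 (by decide)
  have e21 := hv 10 11 (by decide)
  have e22 := hv 10 12 (by decide)
  have e23 := hv 11 12 (by decide)
  have hb : ∀ i, (c i : ℕ) < 3 := fun i => (c i).isLt
  have b0 := hb 0; have b1 := hb 1; have b2 := hb 2; have b3 := hb 3
  have b4 := hb 4; have b5 := hb 5; have b6 := hb 6; have b7 := hb 7
  have b8 := hb 8; have b9 := hb 9; have b10 := hb 10; have b11 := hb 11; have b12 := hb 12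
  simp only [ne_eq, Fin.ext_iff] at e0 e1 e2 e3 e4 e5 e6 e7 e8 e9 e10 e11 e12 e13 e14 e15 e16 e17 e18 e19 e20 e21 e22 e23
  omega

/-- The Yu–Oh orthogonality graph has chromatic number exactly 4. -/
theorem yuOh_chromaticNumber : yuOhGraph.chromaticNumber = 4 := by
  refine le_antisymm ?_ ?_
  · exact_mod_cast yuOh_colorable4.chromaticNumber_le
  · by_contra h
    push_neg at h
    have h3 : yuOhGraph.chromaticNumber ≤ (3 : ℕ) := by
      have : yuOhGraph.chromaticNumber < (3 : ℕ∞) + 1 := by exact_mod_cast h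
      exact Order.le_of_lt_add_one this
    exact yuOh_not_colorable3 (SimpleGraph.chromaticNumber_le_iff_colorable.mp h3)
end
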